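/- Let f = (f_0, …, f_n) be a symmetric signature of arity n and let T = (t_{pq})_{p,q ∈ {0,1}} be an invertible 2 × 2 complex matrix. Define the transformed signature f' = T^{⊗n} f by f'_k = Σ_{x ∈ {0,1}^n} (∏_{i=1}^{n} t_{z(k)_i, x_i}) · f_{|x|}, where |x| denotes the number of 1s among the coordinates of x and z(k) ∈ {0,1}^n is the index whose first k coordinates are 1 and whose remaining coordinates are 0. Then: (1) f satisfies a second order recurrence relation (with some coefficients (a,b,c), not all zero) if and only if f' does; and (2) f satisfies a second order recurrence relation with coefficients (a,b,c) satisfying b² − 4ac ≠ 0 if and only if f' satisfies a second order recurrence relation with coefficients (a',b',c') satisfying b'² − 4a'c' ≠ 0. -/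

import Mathlib

/-- `f` satisfies a second order recurrence relation (with coefficients not all zero). -/
def HasSecondOrderRec (n : ℕ) (f : ℕ → ℂ) : Prop :=
  ∃ a b c : ℂ, (a, b, c) ≠ 0 ∧
    ∀ k, k + 2 ≤ n → a * f k + b * f (k + 1) + c * f (k + 2) = 0

/-- `f` satisfies a second order recurrence relation with coefficients `(a, b, c)`
(not all zero) satisfying `b² - 4ac ≠ 0`. -/
def HasNondegSecondOrderRec (n : ℕ) (f : ℕ → ℂ) : Prop :=
  ∃ a b c : ℂ, (a, b, c) ≠ 0 ∧ b ^ 2 - 4 * a * c ≠ 0 ∧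
    ∀ k, k + 2 ≤ n → a * f k + b * f (k + 1) + c * f (k + 2) = 0

/-!
Identify a symmetric signature `f` with the linear form `X₀ ^ i * X₁ ^ j ↦ f j` on binary forms.
On forms of degree `n` the signature `T^{⊗n} f` is then the precomposition of this form with the
linear substitution `X r ↦ ∑ u, T r u • X u`, and a recurrence with coefficients `(a, b, c)` says
exactly that the form kills every multiple `p * (a X₀² + b X₀X₁ + c X₁²)` with `p` homogeneous of
degree `n - 2`. The substitution is an invertible, degree-preserving algebra map, so it carries
the annihilating quadratic forms of `f'` bijectively onto those of `f`; it multiplies the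
discriminant of a binary quadratic form by `det T ^ 2`.
-/

open MvPolynomial Finset

section LinSubst
variable {σ R : Type*} [Fintype σ] [CommSemiring R]

noncomputable def linSubst (T : Matrix σ σ R) : MvPolynomial σ R →ₐ[R] MvPolynomial σ R :=
  aeval fun r => ∑ u, C (T r u) * X u

lemma linSubst_X (T : Matrix σ σ R) (r : σ) : linSubst T (X r) = ∑ u, C (T r u) * X u :=
  aeval_X _ _

lemma linSubst_linSubst (S T : Matrix σ σ R) (p : MvPolynomial σ R) :
    linSubst S (linSubst T p) = linSubst (T * S) p := by
  change ((linSubst S).comp (linSubst T)) p = _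
  congr 1
  refine algHom_ext fun r => ?_
  simp only [AlgHom.comp_apply, linSubst_X, map_sum, map_mul, algHom_C, Matrix.mul_apply,
    mul_sum, sum_mul, mul_assoc]
  exact sum_comm

lemma linSubst_one [DecidableEq σ] (p : MvPolynomial σ R) : linSubst 1 p = p := by
  change linSubst 1 p = AlgHom.id R _ p
  congr 1
  refine algHom_ext fun r => ?_
  simp [linSubst_X, Matrix.one_apply]

lemma MvPolynomial.IsHomogeneous.linSubst {p : MvPolynomial σ R} {d : ℕ}
    (hp : p.IsHomogeneous d) (T : Matrix σ σ R) : (linSubst T p).IsHomogeneous d := by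
  have h := hp.aeval (fun r => ∑ u, C (T r u) * X u) fun r =>
    IsHomogeneous.sum _ _ _ fun u _ => isHomogeneous_C_mul_X (T r u) u
  rwa [one_mul] at h

lemma linSubst_prod_X {ι : Type*} [Fintype ι] [DecidableEq ι] (T : Matrix σ σ R) (x : ι → σ) :
    linSubst T (∏ i, X (x i)) = ∑ y : ι → σ, C (∏ i, T (x i) (y i)) * ∏ i, X (y i) := by
  simp only [map_prod, linSubst_X, prod_univ_sum, Fintype.piFinset_univ, prod_mul_distrib]

end LinSubst

section Inverse
variable {σ R : Type*} [Fintype σ] [DecidableEq σ] [CommRing R] {T : Matrix σ σ R}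

lemma linSubst_linSubst_inv (hT : IsUnit T) (p : MvPolynomial σ R) :
    linSubst T (linSubst T⁻¹ p) = p := by
  rw [linSubst_linSubst, Matrix.nonsing_inv_mul _ ((Matrix.isUnit_iff_isUnit_det T).mp hT),
    linSubst_one]

lemma linSubst_inv_linSubst (hT : IsUnit T) (p : MvPolynomial σ R) :
    linSubst T⁻¹ (linSubst T p) = p := by
  rw [linSubst_linSubst, Matrix.mul_nonsing_inv _ ((Matrix.isUnit_iff_isUnit_det T).mp hT),
    linSubst_one]

lemma linSubst_injective (hT : IsUnit T) : Function.Injective (linSubst T) :=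
  Function.LeftInverse.injective (linSubst_inv_linSubst hT)

lemma eqOn_homogeneousSubmodule_linSubst_inv (hT : IsUnit T) {L L' : MvPolynomial σ R →ₗ[R] R}
    {d : ℕ} (hL : ∀ p ∈ homogeneousSubmodule σ R d, L' p = L (linSubst T p)) :
    ∀ p ∈ homogeneousSubmodule σ R d, L p = L' (linSubst T⁻¹ p) := fun p hp => by
  rw [hL _ (IsHomogeneous.linSubst hp _), linSubst_linSubst_inv hT]

end Inverse

section Annihilates
variable {σ R : Type*}

def Annihilates [CommSemiring R] (L : MvPolynomial σ R →ₗ[R] R) (m : ℕ) (q : MvPolynomial σ R) :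
    Prop :=
  ∀ p ∈ homogeneousSubmodule σ R m, L (p * q) = 0

theorem annihilates_iff_linSubst [Fintype σ] [DecidableEq σ] [CommRing R] {T : Matrix σ σ R}
    (hT : IsUnit T) {L L' : MvPolynomial σ R →ₗ[R] R} {d m : ℕ}
    (hL : ∀ p ∈ homogeneousSubmodule σ R (m + d), L' p = L (linSubst T p))
    {q : MvPolynomial σ R} (hq : q.IsHomogeneous d) :
    Annihilates L' m q ↔ Annihilates L m (linSubst T q) := by
  refine ⟨fun h p hp => ?_, fun h p hp => ?_⟩
  · have hp' := IsHomogeneous.linSubst hp T⁻¹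
    rw [← linSubst_linSubst_inv hT p, ← map_mul, ← hL _ (hp'.mul hq), h _ hp']
  · rw [hL _ (IsHomogeneous.mul hp hq), map_mul, h _ (IsHomogeneous.linSubst hp T)]

end Annihilates

section BinaryForms
variable {R : Type*} [CommSemiring R]

/-- Only the exponent of `X₁` is read, so `sigForm f` encodes a signature of arity `n` through
its restriction to forms of degree `n`. -/
noncomputable def sigForm (f : ℕ → R) : MvPolynomial (Fin 2) R →ₗ[R] R :=
  (basisMonomials (Fin 2) R).constr R fun s => f (s 1)

lemma X_zero_pow_mul_X_one_pow_eq_monomial (i j : ℕ) :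
    (X 0 ^ i * X 1 ^ j : MvPolynomial (Fin 2) R) =
      monomial (Finsupp.single 0 i + Finsupp.single 1 j) 1 := by
  rw [X_pow_eq_monomial, X_pow_eq_monomial, monomial_mul, one_mul]

lemma sigForm_monomial (f : ℕ → R) (s : Fin 2 →₀ ℕ) : sigForm f (monomial s 1) = f (s 1) := by
  rw [sigForm]
  simpa [coe_basisMonomials] using (basisMonomials (Fin 2) R).constr_basis R (fun s => f (s 1)) s

lemma sigForm_X_pow_mul_X_pow (f : ℕ → R) (i j : ℕ) : sigForm f (X 0 ^ i * X 1 ^ j) = f j := by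
  simp [X_zero_pow_mul_X_one_pow_eq_monomial, sigForm_monomial]

lemma card_filter_eq_zero_add_card_filter_eq_one {n : ℕ} (x : Fin n → Fin 2) :
    #{i | x i = 0} + #{i | x i = 1} = n := by
  have h1 : ∀ i, x i = 1 ↔ ¬ x i = 0 := by omega
  simp only [h1, card_filter_add_card_filter_not, card_univ, Fintype.card_fin]

lemma prod_X_fin_two (n : ℕ) (x : Fin n → Fin 2) :
    ∏ i, (X (x i) : MvPolynomial (Fin 2) R) = X 0 ^ #{i | x i = 0} * X 1 ^ #{i | x i = 1} := by
  rw [← prod_filter_mul_prod_filter_not univ (fun i => x i = 0)]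
  have h1 : ∀ i, ¬ x i = 0 ↔ x i = 1 := by omega
  simp only [h1]
  rw [prod_congr rfl fun i hi => by rw [(mem_filter.mp hi).2], prod_const,
    prod_congr rfl fun i hi => by rw [(mem_filter.mp hi).2], prod_const]

lemma sigForm_prod_X (f : ℕ → R) (n : ℕ) (x : Fin n → Fin 2) :
    sigForm f (∏ i, X (x i)) = f #{i | x i = 1} := by
  rw [prod_X_fin_two, sigForm_X_pow_mul_X_pow]

theorem homogeneousSubmodule_fin_two_le_span (d : ℕ) :
    homogeneousSubmodule (Fin 2) R d ≤
      Submodule.span R {p | ∃ i j, i + j = d ∧ X 0 ^ i * X 1 ^ j = p} := by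
  rw [homogeneousSubmodule_eq_finsupp_supported, AddMonoidAlgebra.supported_eq_span_single]
  refine Submodule.span_mono ?_
  rintro _ ⟨s, hs, rfl⟩
  refine ⟨s 0, s 1, ?_, ?_⟩
  · simpa [Finsupp.degree_eq_sum, Fin.sum_univ_two] using hs
  · rw [X_zero_pow_mul_X_one_pow_eq_monomial]
    show _ = AddMonoidAlgebra.single s 1
    rw [single_eq_monomial]
    congr
    ext k
    fin_cases k <;> simp

lemma annihilates_fin_two_iff (L : MvPolynomial (Fin 2) R →ₗ[R] R) (m : ℕ)
    (q : MvPolynomial (Fin 2) R) :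
    Annihilates L m q ↔ ∀ i j, i + j = m → L (X 0 ^ i * X 1 ^ j * q) = 0 := by
  refine ⟨fun h i j hij => h _ ?_, fun h p hp => ?_⟩
  · rw [← hij]
    exact (isHomogeneous_X_pow 0 i).mul (isHomogeneous_X_pow 1 j)
  · suffices Submodule.span R {p | ∃ i j, i + j = m ∧ X 0 ^ i * X 1 ^ j = p} ≤
        LinearMap.ker (L ∘ₗ LinearMap.mulRight R q) from
      this (homogeneousSubmodule_fin_two_le_span m hp)
    rw [Submodule.span_le]
    rintro _ ⟨i, j, hij, rfl⟩
    exact h i j hij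

noncomputable def binQuad (a b c : R) : MvPolynomial (Fin 2) R :=
  C a * X 0 ^ 2 + C b * (X 0 * X 1) + C c * X 1 ^ 2

lemma isHomogeneous_binQuad (a b c : R) : (binQuad a b c).IsHomogeneous 2 :=
  ((isHomogeneous_C_mul_X_pow a 0 2).add
    (((isHomogeneous_X R 0).mul (isHomogeneous_X R 1)).C_mul b)).add
    (isHomogeneous_C_mul_X_pow c 1 2)

lemma sigForm_mul_binQuad (f : ℕ → R) (a b c : R) (i j : ℕ) :
    sigForm f (X 0 ^ i * X 1 ^ j * binQuad a b c) = a * f j + b * f (j + 1) + c * f (j + 2) := by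
  have : X 0 ^ i * X 1 ^ j * binQuad a b c = a • (X 0 ^ (i + 2) * X 1 ^ j) +
      b • (X 0 ^ (i + 1) * X 1 ^ (j + 1)) + c • (X 0 ^ i * X 1 ^ (j + 2)) := by
    simp only [binQuad, smul_eq_C_mul]
    ring
  simp [this, sigForm_X_pow_mul_X_pow]

theorem recurrence_iff_annihilates (f : ℕ → R) (a b c : R) (m : ℕ) :
    (∀ k, k + 2 ≤ m + 2 → a * f k + b * f (k + 1) + c * f (k + 2) = 0) ↔
      Annihilates (sigForm f) m (binQuad a b c) := by
  simp only [annihilates_fin_two_iff, sigForm_mul_binQuad]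
  exact ⟨fun h i j hij => h j (by omega), fun h k hk => h (m - k) k (by omega)⟩

theorem sigForm_eq_sigForm_linSubst {n : ℕ} {f f' : ℕ → R} (T : Matrix (Fin 2) (Fin 2) R)
    (hf' : ∀ k ≤ n, f' k = ∑ x : Fin n → Fin 2,
      (∏ i : Fin n, T (if (i : ℕ) < k then 1 else 0) (x i)) * f #{i | x i = 1}) :
    ∀ p ∈ homogeneousSubmodule (Fin 2) R n, sigForm f' p = sigForm f (linSubst T p) := by
  intro p hp
  refine LinearMap.eqOn_span (f := sigForm f') (g := sigForm f ∘ₗ (linSubst T).toLinearMap) ?_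
    (homogeneousSubmodule_fin_two_le_span n hp)
  rintro _ ⟨i, j, rfl, rfl⟩
  set z : Fin (i + j) → Fin 2 := fun l => if (l : ℕ) < j then 1 else 0
  have hz1 : #{l | z l = 1} = j := by
    simp [z, Fin.card_filter_val_lt]
  have hz : ∏ l, X (z l) = (X 0 ^ i * X 1 ^ j : MvPolynomial (Fin 2) R) := by
    have := card_filter_eq_zero_add_card_filter_eq_one z
    rw [prod_X_fin_two, hz1, show #{l | z l = 0} = i by omega]
  rw [LinearMap.comp_apply, AlgHom.toLinearMap_apply, ← hz, linSubst_prod_X, sigForm_prod_X, hz1,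
    hf' j (by omega)]
  simp only [map_sum, C_mul', map_smul, sigForm_prod_X, smul_eq_mul]
  rfl

end BinaryForms

section BinaryQuadratic
variable {R : Type*} [CommRing R]

lemma exists_linSubst_binQuad_eq (T : Matrix (Fin 2) (Fin 2) R) (a b c : R) :
    ∃ a' b' c', linSubst T (binQuad a b c) = binQuad a' b' c' ∧
      b' ^ 2 - 4 * a' * c' = T.det ^ 2 * (b ^ 2 - 4 * a * c) := by
  refine ⟨a * T 0 0 ^ 2 + b * T 0 0 * T 1 0 + c * T 1 0 ^ 2,
    2 * a * T 0 0 * T 0 1 + b * (T 0 0 * T 1 1 + T 0 1 * T 1 0) + 2 * c * T 1 0 * T 1 1,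
    a * T 0 1 ^ 2 + b * T 0 1 * T 1 1 + c * T 1 1 ^ 2, ?_, ?_⟩
  · simp only [binQuad, map_add, map_mul, map_pow, algHom_C, algebraMap_eq, linSubst_X,
      Fin.sum_univ_two, map_ofNat]
    ring
  · rw [Matrix.det_fin_two]
    ring

lemma binQuad_eq_zero_iff (a b c : R) : binQuad a b c = 0 ↔ (a, b, c) = 0 := by
  refine ⟨fun h => ?_, fun h => ?_⟩
  · have h0 := congrArg (eval ![1, 0]) h
    have h1 := congrArg (eval ![0, 1]) h
    have h2 := congrArg (eval ![1, 1]) h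
    simp [binQuad] at h0 h1 h2
    simp_all
  · simp_all [binQuad, Prod.ext_iff]

theorem exists_annihilating_binQuad {T : Matrix (Fin 2) (Fin 2) R} (hT : IsUnit T)
    {L L' : MvPolynomial (Fin 2) R →ₗ[R] R} {m : ℕ}
    (hL : ∀ p ∈ homogeneousSubmodule (Fin 2) R (m + 2), L' p = L (linSubst T p))
    {a b c : R} (habc : (a, b, c) ≠ 0) (h : Annihilates L' m (binQuad a b c)) :
    ∃ a' b' c', (a', b', c') ≠ 0 ∧ b' ^ 2 - 4 * a' * c' = T.det ^ 2 * (b ^ 2 - 4 * a * c) ∧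
      Annihilates L m (binQuad a' b' c') := by
  obtain ⟨a', b', c', hq, hdisc⟩ := exists_linSubst_binQuad_eq T a b c
  refine ⟨a', b', c', ?_, hdisc,
    hq ▸ (annihilates_iff_linSubst hT hL (isHomogeneous_binQuad a b c)).mp h⟩
  rw [Ne, ← binQuad_eq_zero_iff] at habc ⊢
  rw [← hq, ← (linSubst T).map_zero]
  exact fun h0 => habc ((linSubst_injective hT) h0)

end BinaryQuadratic

lemma hasNondegSecondOrderRec_of_lt_two {n : ℕ} (hn : n < 2) (f : ℕ → ℂ) :
    HasNondegSecondOrderRec n f :=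
  ⟨0, 1, 0, by simp, by norm_num, fun k hk => by omega⟩

lemma HasNondegSecondOrderRec.hasSecondOrderRec {n : ℕ} {f : ℕ → ℂ}
    (h : HasNondegSecondOrderRec n f) : HasSecondOrderRec n f :=
  let ⟨a, b, c, habc, _, hrec⟩ := h
  ⟨a, b, c, habc, hrec⟩

section Transfer
variable {m : ℕ} {f f' : ℕ → ℂ} {T : Matrix (Fin 2) (Fin 2) ℂ}

theorem HasSecondOrderRec.of_linSubst (hT : IsUnit T)
    (hL : ∀ p ∈ homogeneousSubmodule (Fin 2) ℂ (m + 2), sigForm f' p = sigForm f (linSubst T p))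
    (h : HasSecondOrderRec (m + 2) f') : HasSecondOrderRec (m + 2) f := by
  obtain ⟨a, b, c, habc, hrec⟩ := h
  obtain ⟨a', b', c', habc', -, hann⟩ :=
    exists_annihilating_binQuad hT hL habc ((recurrence_iff_annihilates f' a b c m).mp hrec)
  exact ⟨a', b', c', habc', (recurrence_iff_annihilates f a' b' c' m).mpr hann⟩

theorem HasNondegSecondOrderRec.of_linSubst (hT : IsUnit T)
    (hL : ∀ p ∈ homogeneousSubmodule (Fin 2) ℂ (m + 2), sigForm f' p = sigForm f (linSubst T p))
    (h : HasNondegSecondOrderRec (m + 2) f') : HasNondegSecondOrderRec (m + 2) f := by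
  obtain ⟨a, b, c, habc, hdisc, hrec⟩ := h
  obtain ⟨a', b', c', habc', hdisc', hann⟩ :=
    exists_annihilating_binQuad hT hL habc ((recurrence_iff_annihilates f' a b c m).mp hrec)
  have hdet : T.det ≠ 0 := ((Matrix.isUnit_iff_isUnit_det T).mp hT).ne_zero
  exact ⟨a', b', c', habc', hdisc' ▸ mul_ne_zero (pow_ne_zero 2 hdet) hdisc,
    (recurrence_iff_annihilates f a' b' c' m).mpr hann⟩

end Transfer

theorem stmt_2 (n : ℕ) (f f' : ℕ → ℂ) (T : Matrix (Fin 2) (Fin 2) ℂ)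
    (hT : IsUnit T)
    (hf' : ∀ k ≤ n, f' k =
      ∑ x : Fin n → Fin 2,
        (∏ i : Fin n, T (if (i : ℕ) < k then 1 else 0) (x i)) *
          f ((Finset.univ.filter (fun i => x i = 1)).card)) :
    (HasSecondOrderRec n f ↔ HasSecondOrderRec n f') ∧
      (HasNondegSecondOrderRec n f ↔ HasNondegSecondOrderRec n f') := by
  obtain hn | ⟨m, rfl⟩ : n < 2 ∨ ∃ m, n = m + 2 :=
    (lt_or_ge n 2).imp_right fun hn => ⟨n - 2, by omega⟩
  · have h := hasNondegSecondOrderRec_of_lt_two hn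
    exact ⟨iff_of_true (h f).hasSecondOrderRec (h f').hasSecondOrderRec, iff_of_true (h f) (h f')⟩
  have hL := sigForm_eq_sigForm_linSubst T hf'
  have hL' := eqOn_homogeneousSubmodule_linSubst_inv hT hL
  have hT' : IsUnit T⁻¹ := Matrix.isUnit_nonsing_inv_iff.mpr hT
  exact ⟨⟨.of_linSubst hT' hL', .of_linSubst hT hL⟩, ⟨.of_linSubst hT' hL', .of_linSubst hT hL⟩⟩
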